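/- arXiv:1707.03145 — 2 statements merged into one kernel-verified Lean document; each statement's English description precedes it below -/
import Mathlib

section
/- Let F^(L), F^(R) : ℝ² → ℝ² be bilinear maps sharing the interface F^(L)(0,v) = F^(R)(0,v) =: F₀(v) for all v, with F₀′(v) ≠ 0 for all v ∈ [0,1]. Define α^(S)(v) = det[D_u F^(S)(0,v), F₀′(v)] and β^(S)(v) = (D_u F^(S)(0,v) · F₀′(v)) / ‖F₀′(v)‖² for S ∈ {L,R}, β(v) = det[D_u F^(L)(0,v), D_u F^(R)(0,v)], Z(v) = (α^(L)(v))² D_uu F^(R)(0,v) − ( (α^(R)(v))² D_uu F^(L)(0,v) + 2 α^(R)(v) β(v) D_uv F^(L)(0,v) + β(v)² F₀″(v) ), and θ(v) = det[Z(v), D_u F^(L)(0,v)]. Then for all v ∈ [0,1], θ(v) = 2 ( α^(L)(v) (β^(L))′(v) − (α^(L))′(v) β^(L)(v) ) α^(R)(v) β(v). -/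
open Set

/-- The 2×2 determinant `det[x, y] = x₁ y₂ − x₂ y₁` of two vectors in `ℝ²`. -/
noncomputable def det2 (x y : ℝ × ℝ) : ℝ := x.1 * y.2 - x.2 * y.1

/-- The Euclidean dot product of two vectors in `ℝ²`. -/
noncomputable def dot2 (x y : ℝ × ℝ) : ℝ := x.1 * y.1 + x.2 * y.2

/-- `F : ℝ² → ℝ²` is bilinear: each component has the form `a + b·u + c·v + d·u·v`. -/
def IsBilinear (F : ℝ → ℝ → ℝ × ℝ) : Prop :=
  ∃ a b c d : ℝ × ℝ, ∀ u v : ℝ, F u v = a + u • b + v • c + (u * v) • d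

/-- `D_u F(0,v)`. -/
noncomputable def DuF (F : ℝ → ℝ → ℝ × ℝ) (v : ℝ) : ℝ × ℝ := deriv (fun u => F u v) 0

/-- `D_uu F(0,v)`. -/
noncomputable def DuuF (F : ℝ → ℝ → ℝ × ℝ) (v : ℝ) : ℝ × ℝ :=
  deriv (deriv (fun u => F u v)) 0

/-- `D_uv F(0,v)`. -/
noncomputable def DuvF (F : ℝ → ℝ → ℝ × ℝ) (v : ℝ) : ℝ × ℝ := deriv (fun w => DuF F w) v

/-- `F₀′(v)`, the derivative of the interface curve `v ↦ F(0,v)`. -/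
noncomputable def F0d (F : ℝ → ℝ → ℝ × ℝ) (v : ℝ) : ℝ × ℝ := deriv (fun w => F 0 w) v

/-- `F₀″(v)`, the second derivative of the interface curve `v ↦ F(0,v)`. -/
noncomputable def F0dd (F : ℝ → ℝ → ℝ × ℝ) (v : ℝ) : ℝ × ℝ :=
  deriv (deriv (fun w => F 0 w)) v

/-- `α^(S)(v) = det[D_u F^(S)(0,v), F₀′(v)]`, where `G` carries the interface `F₀`. -/
noncomputable def alphaF (F G : ℝ → ℝ → ℝ × ℝ) (v : ℝ) : ℝ := det2 (DuF F v) (F0d G v)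

/-- `β^(S)(v) = (D_u F^(S)(0,v) · F₀′(v)) / ‖F₀′(v)‖²`. -/
noncomputable def betaF (F G : ℝ → ℝ → ℝ × ℝ) (v : ℝ) : ℝ :=
  dot2 (DuF F v) (F0d G v) / dot2 (F0d G v) (F0d G v)

/-- `β(v) = det[D_u F^(L)(0,v), D_u F^(R)(0,v)]`. -/
noncomputable def betaBar (FL FR : ℝ → ℝ → ℝ × ℝ) (v : ℝ) : ℝ :=
  det2 (DuF FL v) (DuF FR v)

/-- `Z(v) = (α^(L)(v))² D_uu F^(R)(0,v) − ((α^(R)(v))² D_uu F^(L)(0,v)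
      + 2 α^(R)(v) β(v) D_uv F^(L)(0,v) + β(v)² F₀″(v))`. -/
noncomputable def Zfun (FL FR : ℝ → ℝ → ℝ × ℝ) (v : ℝ) : ℝ × ℝ :=
  (alphaF FL FL v) ^ 2 • DuuF FR v -
    ((alphaF FR FL v) ^ 2 • DuuF FL v + (2 * alphaF FR FL v * betaBar FL FR v) • DuvF FL v +
      (betaBar FL FR v) ^ 2 • F0dd FL v)


/-!
For bilinear maps the second derivatives `D_uu F` and `F₀″` vanish and `D_uv F^(L) = d` is
constant, so `Z = -2 α^(R) β • d`. Moreover `α^(L)` and `β^(L)` are affine in `v`, and the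
Lagrange-type identity `det[x,c] ⟨d,c⟩ - det[d,c] ⟨x,c⟩ = det[x,d] ‖c‖²` turns the Wronskian
`α^(L) (β^(L))′ - (α^(L))′ β^(L)` into `det[D_u F^(L), d]`.
-/

lemma det2_add_smul_left (x y z : ℝ × ℝ) (t : ℝ) :
    det2 (x + t • y) z = det2 x z + t * det2 y z := by
  simp only [det2, Prod.fst_add, Prod.snd_add, Prod.smul_fst, Prod.smul_snd, smul_eq_mul]
  ring

lemma dot2_add_smul_left (x y z : ℝ × ℝ) (t : ℝ) :
    dot2 (x + t • y) z = dot2 x z + t * dot2 y z := by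
  simp only [dot2, Prod.fst_add, Prod.snd_add, Prod.smul_fst, Prod.smul_snd, smul_eq_mul]
  ring

lemma det2_smul_left (t : ℝ) (x y : ℝ × ℝ) : det2 (t • x) y = t * det2 x y := by
  simp only [det2, Prod.smul_fst, Prod.smul_snd, smul_eq_mul]
  ring

lemma det2_comm (x y : ℝ × ℝ) : det2 x y = -det2 y x := by
  simp only [det2]
  ring

lemma det2_mul_dot2_sub_det2_mul_dot2 (x y z : ℝ × ℝ) :
    det2 x z * dot2 y z - det2 y z * dot2 x z = det2 x y * dot2 z z := by
  simp only [det2, dot2]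
  ring

lemma dot2_self_ne_zero {z : ℝ × ℝ} (hz : z ≠ 0) : dot2 z z ≠ 0 := by
  rw [dot2, Ne, mul_self_add_mul_self_eq_zero]
  exact fun h => hz (Prod.ext h.1 h.2)

lemma hasDerivAt_const_add_smul {E : Type*} [NormedAddCommGroup E] [NormedSpace ℝ E]
    (p q : E) (t : ℝ) : HasDerivAt (fun s : ℝ => p + s • q) q t := by
  simpa using ((hasDerivAt_id t).smul_const q).const_add p

section Bilinear

variable {F : ℝ → ℝ → ℝ × ℝ} {a b c d : ℝ × ℝ}

lemma deriv_partial_u_eq (hF : ∀ u v, F u v = a + u • b + v • c + (u * v) • d) (v : ℝ) :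
    deriv (fun u => F u v) = fun _ => b + v • d := by
  funext u
  have hline : (fun u => F u v) = fun u => (a + v • c) + u • (b + v • d) := by
    funext u
    rw [hF]
    module
  rw [hline]
  exact (hasDerivAt_const_add_smul _ _ u).deriv

lemma deriv_interface_eq (hF : ∀ u v, F u v = a + u • b + v • c + (u * v) • d) :
    deriv (fun v => F 0 v) = fun _ => c := by
  funext v
  have hline : (fun v => F 0 v) = fun v => a + v • c := by
    funext v
    rw [hF]
    module
  rw [hline]
  exact (hasDerivAt_const_add_smul _ _ v).deriv

lemma DuF_eq (hF : ∀ u v, F u v = a + u • b + v • c + (u * v) • d) (v : ℝ) :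
    DuF F v = b + v • d := by
  rw [DuF, deriv_partial_u_eq hF]

lemma DuuF_eq_zero (hF : ∀ u v, F u v = a + u • b + v • c + (u * v) • d) (v : ℝ) :
    DuuF F v = 0 := by
  rw [DuuF, deriv_partial_u_eq hF, deriv_const]

lemma DuvF_eq (hF : ∀ u v, F u v = a + u • b + v • c + (u * v) • d) (v : ℝ) :
    DuvF F v = d := by
  simp only [DuvF, DuF_eq hF]
  exact (hasDerivAt_const_add_smul _ _ v).deriv

lemma F0d_eq (hF : ∀ u v, F u v = a + u • b + v • c + (u * v) • d) (v : ℝ) :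
    F0d F v = c := by
  rw [F0d, deriv_interface_eq hF]

lemma F0dd_eq_zero (hF : ∀ u v, F u v = a + u • b + v • c + (u * v) • d) (v : ℝ) :
    F0dd F v = 0 := by
  rw [F0dd, deriv_interface_eq hF, deriv_const]

lemma hasDerivAt_alphaF_self (hF : ∀ u v, F u v = a + u • b + v • c + (u * v) • d) (v : ℝ) :
    HasDerivAt (fun w => alphaF F F w) (det2 d c) v := by
  have haffine : (fun w => alphaF F F w) = fun w => det2 b c + w • det2 d c := by
    funext w
    rw [alphaF, DuF_eq hF, F0d_eq hF, det2_add_smul_left, smul_eq_mul]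
  rw [haffine]
  exact hasDerivAt_const_add_smul _ _ v

lemma hasDerivAt_betaF_self (hF : ∀ u v, F u v = a + u • b + v • c + (u * v) • d) (v : ℝ) :
    HasDerivAt (fun w => betaF F F w) (dot2 d c / dot2 c c) v := by
  have haffine : (fun w => betaF F F w) =
      fun w => dot2 b c / dot2 c c + w • (dot2 d c / dot2 c c) := by
    funext w
    rw [betaF, DuF_eq hF, F0d_eq hF, dot2_add_smul_left, smul_eq_mul, add_div, mul_div_assoc]
  rw [haffine]
  exact hasDerivAt_const_add_smul _ _ v

lemma alphaF_mul_deriv_betaF_sub (hF : ∀ u v, F u v = a + u • b + v • c + (u * v) • d)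
    (hc : c ≠ 0) (v : ℝ) :
    alphaF F F v * deriv (fun w => betaF F F w) v -
        deriv (fun w => alphaF F F w) v * betaF F F v = det2 (DuF F v) d := by
  rw [(hasDerivAt_betaF_self hF v).deriv, (hasDerivAt_alphaF_self hF v).deriv, alphaF, betaF,
    F0d_eq hF, mul_div_assoc', mul_div_assoc', ← sub_div,
    det2_mul_dot2_sub_det2_mul_dot2, mul_div_assoc, div_self (dot2_self_ne_zero hc), mul_one]

end Bilinear

lemma Zfun_eq {FL FR : ℝ → ℝ → ℝ × ℝ} {a b c d a' b' c' d' : ℝ × ℝ}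
    (hL : ∀ u v, FL u v = a + u • b + v • c + (u * v) • d)
    (hR : ∀ u v, FR u v = a' + u • b' + v • c' + (u * v) • d') (v : ℝ) :
    Zfun FL FR v = -(2 * alphaF FR FL v * betaBar FL FR v) • d := by
  rw [Zfun, DuuF_eq_zero hR, DuuF_eq_zero hL, DuvF_eq hL, F0dd_eq_zero hL]
  simp only [smul_zero, zero_add, add_zero, zero_sub, neg_smul]

theorem stmt2_general (FL FR : ℝ → ℝ → ℝ × ℝ)
    (hFL : IsBilinear FL) (hFR : IsBilinear FR)
    (hreg : ∀ v ∈ Icc (0:ℝ) 1, F0d FL v ≠ 0) :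
    ∀ v ∈ Icc (0:ℝ) 1,
      det2 (Zfun FL FR v) (DuF FL v) =
        2 * (alphaF FL FL v * deriv (fun w => betaF FL FL w) v -
              deriv (fun w => alphaF FL FL w) v * betaF FL FL v) *
          alphaF FR FL v * betaBar FL FR v := by
  obtain ⟨a, b, c, d, hL⟩ := hFL
  obtain ⟨a', b', c', d', hR⟩ := hFR
  intro v hv
  have hc : c ≠ 0 := F0d_eq hL v ▸ hreg v hv
  rw [Zfun_eq hL hR, alphaF_mul_deriv_betaF_sub hL hc, det2_smul_left, det2_comm d]
  ring

theorem stmt2 (FL FR : ℝ → ℝ → ℝ × ℝ)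
    (hFL : IsBilinear FL) (hFR : IsBilinear FR)
    (hInterface : ∀ v : ℝ, FL 0 v = FR 0 v)
    (hreg : ∀ v ∈ Icc (0:ℝ) 1, F0d FL v ≠ 0) :
    ∀ v ∈ Icc (0:ℝ) 1,
      det2 (Zfun FL FR v) (DuF FL v) =
        2 * (alphaF FL FL v * deriv (fun w => betaF FL FL w) v -
              deriv (fun w => alphaF FL FL w) v * betaF FL FL v) *
          alphaF FR FL v * betaBar FL FR v :=
  stmt2_general FL FR hFL hFR hreg
end

section
/- Let p ≥ 5 and 2 ≤ r ≤ p−3 be integers, k ∈ ℕ₀, and 0 = τ₀ < τ₁ < ⋯ < τ_k < τ_{k+1} = 1. Let α̃^(L), α̃^(R) be coprime real polynomial functions of degree at most 1, each nonvanishing on [0,1], and let d_α̃ = max(deg α̃^(L), deg α̃^(R)). Then { g : [0,1] → ℝ | α̃^(L)·g ∈ S(p,r) and α̃^(R)·g ∈ S(p,r) } = S(p − d_α̃, r). -/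
open Set Polynomial

noncomputable section

/-- `f : ℝ → ℝ` restricted to `[0,1]` is a spline of degree at most `d` for the knots
`0 = τ 0 < τ 1 < ⋯ < τ k < τ (k+1) = 1`, with smoothness of order `s i` at the interior
knot `τ i` (`1 ≤ i ≤ k`): on each knot interval `f` coincides with a polynomial of degree
at most `d`, and the one-sided derivatives of orders `0, …, s i` (computed from the
polynomial pieces) agree at each interior knot `τ i`. -/
def IsSplineOn (k : ℕ) (τ : ℕ → ℝ) (d : ℕ) (s : ℕ → ℕ) (f : ℝ → ℝ) : Prop :=
  ∃ P : ℕ → Polynomial ℝ,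
    (∀ i ≤ k, (P i).natDegree ≤ d) ∧
    (∀ i ≤ k, ∀ x ∈ Set.Icc (τ i) (τ (i+1)), f x = (P i).eval x) ∧
    (∀ i, 1 ≤ i → i ≤ k → ∀ j ≤ s i,
      ((fun Q : Polynomial ℝ => Polynomial.derivative Q)^[j] (P (i-1))).eval (τ i) =
        ((fun Q : Polynomial ℝ => Polynomial.derivative Q)^[j] (P i)).eval (τ i))

/-- The spline space `S(d, s)` on `[0,1]`, as a set of functions `[0,1] → ℝ`:
restrictions to `[0,1]` of the functions described by `IsSplineOn`. -/
def SplineSpace (k : ℕ) (τ : ℕ → ℝ) (d : ℕ) (s : ℕ → ℕ) :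
    Set (Set.Icc (0:ℝ) 1 → ℝ) :=
  {g | ∃ f : ℝ → ℝ, IsSplineOn k τ d s f ∧ ∀ x : Set.Icc (0:ℝ) 1, g x = f x.1}

/-! On each knot interval, `α * g` and `β * g` are polynomials `P` and `Q` with `β * P = α * Q`,
so by coprimality `α ∣ P` and `g` itself is the polynomial `P / α` there, of degree at most
`d - deg α` and, since `Q = β * (P / α)`, at most `d - deg β`. Smoothness of order `s` at a
knot `t` says that `(X - t) ^ (s + 1)` divides the difference of the two adjacent pieces; as
`α t ≠ 0` this power is coprime to `α`, so the condition descends from the pieces of `α * g`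
to those of `g`. The reverse inclusion is multiplication by `α` and `β`. -/

namespace Polynomial

variable {K : Type*} [Field K] [CharZero K]

theorem iterate_derivative_eval_eq_iff_pow_dvd {A B : K[X]} {t : K} {n : ℕ} :
    (∀ j ≤ n, (derivative^[j] A).eval t = (derivative^[j] B).eval t) ↔
      (X - C t) ^ (n + 1) ∣ A - B := by
  simp_rw [← sub_eq_zero (b := (derivative^[_] B).eval t), ← eval_sub,
    ← iterate_derivative_sub]
  rcases eq_or_ne (A - B) 0 with hAB | hAB
  · simp [hAB]
  · rw [← le_rootMultiplicity_iff hAB, Nat.succ_le_iff,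
      lt_rootMultiplicity_iff_isRoot_iterate_derivative hAB]
    rfl

theorem iterate_derivative_eval_eq_mul_left (β : K[X]) {A B : K[X]} {t : K} {n : ℕ}
    (h : ∀ j ≤ n, (derivative^[j] A).eval t = (derivative^[j] B).eval t) :
    ∀ j ≤ n, (derivative^[j] (β * A)).eval t = (derivative^[j] (β * B)).eval t := by
  rw [iterate_derivative_eval_eq_iff_pow_dvd] at h ⊢
  rw [← mul_sub]
  exact h.mul_left β

theorem iterate_derivative_eval_eq_of_mul_left {β A B : K[X]} {t : K} {n : ℕ}
    (hβ : β.eval t ≠ 0)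
    (h : ∀ j ≤ n, (derivative^[j] (β * A)).eval t = (derivative^[j] (β * B)).eval t) :
    ∀ j ≤ n, (derivative^[j] A).eval t = (derivative^[j] B).eval t := by
  rw [iterate_derivative_eval_eq_iff_pow_dvd] at h ⊢
  have hcop : IsCoprime β ((X - C t) ^ (n + 1)) :=
    (irreducible_X_sub_C t).coprime_pow_of_not_dvd _ (by rwa [dvd_iff_isRoot])
  rw [← mul_sub] at h
  exact hcop.symm.dvd_of_dvd_mul_left h

theorem natDegree_le_sub_of_natDegree_mul_le {R : Type*} [Semiring R] [NoZeroDivisors R]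
    {γ q : R[X]} {p : ℕ} (hγ : γ ≠ 0) (h : (γ * q).natDegree ≤ p) :
    q.natDegree ≤ p - γ.natDegree := by
  rcases eq_or_ne q 0 with rfl | hq
  · simp
  · rw [natDegree_mul hγ hq] at h
    omega

end Polynomial

theorem knot_interval_subset_Icc {k : ℕ} {τ : ℕ → ℝ} (hτ0 : τ 0 = 0) (hτ1 : τ (k + 1) = 1)
    (hτ : ∀ i ≤ k, τ i < τ (i + 1)) {i : ℕ} (hi : i ≤ k) :
    Icc (τ i) (τ (i + 1)) ⊆ Icc 0 1 := by
  have hmono : MonotoneOn τ (Iic (k + 1)) :=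
    monotoneOn_of_le_succ ordConnected_Iic fun a _ _ ha =>
      (hτ a (by simpa [Order.succ_eq_add_one] using ha)).le
  rw [← hτ0, ← hτ1]
  exact Icc_subset_Icc (hmono (by simp) (by simp; omega) (by omega))
    (hmono (by simp; omega) (by simp) (by omega))

section SplineSpace

variable {k : ℕ} {τ : ℕ → ℝ} {d : ℕ} {s : ℕ → ℕ}

theorem mul_mem_splineSpace {g : Icc (0 : ℝ) 1 → ℝ} (hg : g ∈ SplineSpace k τ d s)
    {β : ℝ[X]} {e : ℕ} (hβ : β.natDegree + d ≤ e) :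
    (fun x : Icc (0 : ℝ) 1 => β.eval x.1 * g x) ∈ SplineSpace k τ e s := by
  obtain ⟨f, ⟨P, hdeg, hval, hsmooth⟩, hgf⟩ := hg
  refine ⟨fun x => β.eval x * f x, ⟨fun i => β * P i, fun i hi => ?_, fun i hi x hx => ?_,
    fun i hi₁ hik => iterate_derivative_eval_eq_mul_left β (hsmooth i hi₁ hik)⟩,
    fun x => congrArg (β.eval x.1 * ·) (hgf x)⟩
  · exact natDegree_mul_le.trans ((Nat.add_le_add_left (hdeg i hi) _).trans hβ)
  · simp only [hval i hi x hx, eval_mul]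

theorem mem_splineSpace_of_pieces (hτ0 : τ 0 = 0) (hτ1 : τ (k + 1) = 1)
    (hτ : ∀ i ≤ k, τ i < τ (i + 1)) {g : Icc (0 : ℝ) 1 → ℝ} (Q : ℕ → ℝ[X])
    (hdeg : ∀ i ≤ k, (Q i).natDegree ≤ d)
    (hval : ∀ i ≤ k, ∀ x : Icc (0 : ℝ) 1, x.1 ∈ Icc (τ i) (τ (i + 1)) → g x = (Q i).eval x.1)
    (hsmooth : ∀ i, 1 ≤ i → i ≤ k → ∀ j ≤ s i,
      (derivative^[j] (Q (i - 1))).eval (τ i) = (derivative^[j] (Q i)).eval (τ i)) :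
    g ∈ SplineSpace k τ d s := by
  refine ⟨IccExtend zero_le_one g, ⟨Q, hdeg, fun i hi x hx => ?_, hsmooth⟩,
    fun x => (IccExtend_val _ g x).symm⟩
  have hx01 := knot_interval_subset_Icc hτ0 hτ1 hτ hi hx
  rw [IccExtend_of_mem _ g hx01]
  exact hval i hi ⟨x, hx01⟩ hx

theorem mem_splineSpace_of_isCoprime (hτ0 : τ 0 = 0) (hτ1 : τ (k + 1) = 1)
    (hτ : ∀ i ≤ k, τ i < τ (i + 1)) {α β : ℝ[X]} (hαβ : IsCoprime α β)
    (hα : ∀ v ∈ Icc (0 : ℝ) 1, α.eval v ≠ 0) {g : Icc (0 : ℝ) 1 → ℝ}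
    (hαg : (fun x : Icc (0 : ℝ) 1 => α.eval x.1 * g x) ∈ SplineSpace k τ d s)
    (hβg : (fun x : Icc (0 : ℝ) 1 => β.eval x.1 * g x) ∈ SplineSpace k τ d s) :
    g ∈ SplineSpace k τ (d - max α.natDegree β.natDegree) s := by
  obtain ⟨fα, ⟨Pα, hdegα, hvalα, hsmoothα⟩, hgα⟩ := hαg
  obtain ⟨fβ, ⟨Pβ, hdegβ, hvalβ, -⟩, hgβ⟩ := hβg
  have hα0 : α ≠ 0 := fun h => hα 0 (left_mem_Icc.2 zero_le_one) (by simp [h])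
  have hsub {i : ℕ} (hi : i ≤ k) := knot_interval_subset_Icc hτ0 hτ1 hτ hi
  have hcross : ∀ i ≤ k, β * Pα i = α * Pβ i := by
    intro i hi
    refine eq_of_infinite_eval_eq _ _ ((Icc_infinite (hτ i hi)).mono fun x hx => ?_)
    have hx01 := hsub hi hx
    simp only [mem_ofPred_eq, eval_mul, ← hvalα i hi x hx, ← hvalβ i hi x hx,
      ← hgα ⟨x, hx01⟩, ← hgβ ⟨x, hx01⟩]
    ring
  set Q : ℕ → ℝ[X] := fun i => Pα i / α
  have hPα : ∀ i ≤ k, Pα i = α * Q i := fun i hi =>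
    (EuclideanDomain.mul_div_cancel' hα0 (hαβ.dvd_of_dvd_mul_left ⟨_, hcross i hi⟩)).symm
  have hPβ : ∀ i ≤ k, Pβ i = β * Q i := fun i hi =>
    mul_left_cancel₀ hα0 (by rw [← hcross i hi, hPα i hi, mul_left_comm])
  refine mem_splineSpace_of_pieces hτ0 hτ1 hτ Q (fun i hi => ?_) (fun i hi x hx => ?_)
    (fun i hi₁ hik => ?_)
  · have hQα := natDegree_le_sub_of_natDegree_mul_le hα0 (hPα i hi ▸ hdegα i hi)
    rcases eq_or_ne β 0 with rfl | hβ0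
    · simp only [natDegree_zero, max_eq_left (Nat.zero_le _)]
      exact hQα
    · have hQβ := natDegree_le_sub_of_natDegree_mul_le hβ0 (hPβ i hi ▸ hdegβ i hi)
      omega
  · refine mul_left_cancel₀ (hα x x.2) ?_
    rw [← eval_mul, ← hPα i hi, ← hvalα i hi x hx, ← hgα x]
  · have hτi := hα _ (hsub hik (left_mem_Icc.2 (hτ i hik).le))
    have := hsmoothα i hi₁ hik
    rw [hPα _ (by omega), hPα i hik] at this
    exact iterate_derivative_eval_eq_of_mul_left hτi this

end SplineSpace

theorem stmt13_general (p r k : ℕ) (hp : 5 ≤ p)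
    (τ : ℕ → ℝ) (hτ0 : τ 0 = 0) (hτ1 : τ (k+1) = 1)
    (hτ : ∀ i ≤ k, τ i < τ (i+1))
    (αtL αtR : Polynomial ℝ) (hcop : IsCoprime αtL αtR)
    (hdL : αtL.natDegree ≤ 1) (hdR : αtR.natDegree ≤ 1)
    (hneL : ∀ v ∈ Set.Icc (0:ℝ) 1, αtL.eval v ≠ 0) :
    {g : Set.Icc (0:ℝ) 1 → ℝ |
        (fun x : Set.Icc (0:ℝ) 1 => αtL.eval x.1 * g x) ∈
          SplineSpace k τ p (fun _ => r) ∧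
        (fun x : Set.Icc (0:ℝ) 1 => αtR.eval x.1 * g x) ∈
          SplineSpace k τ p (fun _ => r)} =
      SplineSpace k τ (p - max αtL.natDegree αtR.natDegree) (fun _ => r) := by
  ext g
  exact ⟨fun ⟨hL, hR⟩ => mem_splineSpace_of_isCoprime hτ0 hτ1 hτ hcop hneL hL hR,
    fun hg => ⟨mul_mem_splineSpace hg (by omega), mul_mem_splineSpace hg (by omega)⟩⟩

/-- the division property of spline spaces. -/
theorem stmt13 (p r k : ℕ) (hp : 5 ≤ p) (hr2 : 2 ≤ r) (hrp : r + 3 ≤ p)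
    (τ : ℕ → ℝ) (hτ0 : τ 0 = 0) (hτ1 : τ (k+1) = 1)
    (hτ : ∀ i ≤ k, τ i < τ (i+1))
    (αtL αtR : Polynomial ℝ) (hcop : IsCoprime αtL αtR)
    (hdL : αtL.natDegree ≤ 1) (hdR : αtR.natDegree ≤ 1)
    (hneL : ∀ v ∈ Set.Icc (0:ℝ) 1, αtL.eval v ≠ 0)
    (hneR : ∀ v ∈ Set.Icc (0:ℝ) 1, αtR.eval v ≠ 0) :
    {g : Set.Icc (0:ℝ) 1 → ℝ |
        (fun x : Set.Icc (0:ℝ) 1 => αtL.eval x.1 * g x) ∈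
          SplineSpace k τ p (fun _ => r) ∧
        (fun x : Set.Icc (0:ℝ) 1 => αtR.eval x.1 * g x) ∈
          SplineSpace k τ p (fun _ => r)} =
      SplineSpace k τ (p - max αtL.natDegree αtR.natDegree) (fun _ => r) :=
  stmt13_general p r k hp τ hτ0 hτ1 hτ αtL αtR hcop hdL hdR hneL
end
end
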